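/- arXiv:1612.05043 — 5 statements merged into one kernel-verified Lean document; each statement's English description precedes it below -/
import Mathlib

section
/- For any finite simple graph G with an orientation σ, the skew-rank of G^σ satisfies sr(G^σ) ≥ r(G) − 2d(G), where r(G) is the rank of the adjacency matrix of G and d(G) = |E(G)| − |V(G)| + θ(G) is the dimension of the cycle space of G (θ(G) the number of connected components). -/
open scoped Classical

/-- `S` is a skew-adjacency matrix of some orientation of the simple graph `G`:
entries on arcs are `±1` (with `S j i = - S i j`), and `0` off edges. -/
def IsSkewAdjMatrix {V : Type*} (G : SimpleGraph V) (S : Matrix V V ℝ) : Prop :=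
  (∀ i j, G.Adj i j → S i j = 1 ∨ S i j = -1) ∧
  (∀ i j, ¬ G.Adj i j → S i j = 0) ∧
  (∀ i j, S j i = - S i j)

/-- The real adjacency matrix of a simple graph. -/
noncomputable def adjMat {V : Type*} (G : SimpleGraph V) : Matrix V V ℝ :=
  Matrix.of fun i j => if G.Adj i j then 1 else 0

/-- The dimension of the cycle space: `|E(G)| - |V(G)| + θ(G)`. -/
noncomputable def cycDim {V : Type*} (G : SimpleGraph V) : ℤ :=
  (G.edgeSet.ncard : ℤ) - Nat.card V + Nat.card G.ConnectedComponent

/-!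
Take a breadth-first spanning forest of `G`: each non-root vertex `v` is joined to a parent one
step closer to the root of its component, so the forest has `|V| - θ(G)` edges and the remaining
`d(G)` edges of `G` are non-tree edges. If `M` and `N` are matrices whose nonzero entries sit
exactly on the (ordered) edges of `G`, one can choose diagonal matrices `D`, `E`, vertex by vertex
outward from the roots, such that `D M E` agrees with `N` on both entries of every tree edge.
Then `N - D M E` has nonzero rows only at endpoints of non-tree edges, so
`rank N ≤ rank M + rank (N - D M E) ≤ rank M + 2 d(G)`. Take `N = A(G)` and `M = S(G^σ)`.
-/

namespace Matrix

variable {V K : Type*} [Fintype V] [Field K]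

theorem rank_add_le (A B : Matrix V V K) : (A + B).rank ≤ A.rank + B.rank := by
  unfold rank
  rw [mulVecLin_add]
  exact (Submodule.finrank_mono (LinearMap.range_add_le _ _)).trans
    (Submodule.finrank_add_le_finrank_add_finrank _ _)

theorem rank_le_two_mul_card_of_support_subset {T : Matrix V V K} {E : Finset (Sym2 V)}
    (hT : ∀ u v, T u v ≠ 0 → s(u, v) ∈ E) : T.rank ≤ 2 * E.card := by
  classical
  refine (T.rank_le_card_of_support_subset (E.biUnion Sym2.toFinset) fun u hu => ?_).trans ?_
  · obtain ⟨v, hv⟩ := Function.ne_iff.mp hu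
    exact Finset.mem_biUnion.mpr
      ⟨s(u, v), hT u v hv, Sym2.mem_toFinset.mpr (Sym2.mem_mk_left u v)⟩
  · refine Finset.card_biUnion_le.trans ?_
    rw [mul_comm, ← smul_eq_mul, ← Finset.sum_const]
    refine Finset.sum_le_sum fun e _ => ?_
    rw [Sym2.card_toFinset]
    split_ifs <;> omega

end Matrix

namespace SimpleGraph

variable {V K : Type*} (G : SimpleGraph V)

theorem exists_adj_dist_add_one_eq {u v : V} (h : G.dist u v ≠ 0) :
    ∃ w, G.Adj w v ∧ G.dist u w + 1 = G.dist u v := by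
  obtain ⟨p, hp⟩ := G.exists_walk_of_dist_ne_zero h
  have hnil : ¬ p.Nil := fun hn => h (by rw [← hp, hn.length_eq_zero])
  have hadj := p.adj_penultimate hnil
  refine ⟨p.penultimate, hadj, le_antisymm ?_ ?_⟩
  · have := G.dist_le p.dropLast
    rw [p.length_dropLast] at this
    omega
  · have := hadj.reachable.dist_triangle_right u
    rwa [dist_eq_one_iff_adj.mpr hadj] at this

noncomputable def bfsRoot (v : V) : V := (G.connectedComponentMk v).out

noncomputable def bfsDepth (v : V) : ℕ := G.dist (G.bfsRoot v) v

noncomputable def bfsParent (v : V) : V :=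
  if h : G.bfsDepth v = 0 then v else (G.exists_adj_dist_add_one_eq h).choose

variable {G}

theorem reachable_bfsRoot (v : V) : G.Reachable (G.bfsRoot v) v :=
  ConnectedComponent.exact (G.connectedComponentMk v).out_eq

theorem bfsRoot_eq_of_adj {u v : V} (h : G.Adj u v) : G.bfsRoot u = G.bfsRoot v := by
  rw [bfsRoot, ConnectedComponent.sound h.reachable, bfsRoot]

theorem bfsDepth_eq_zero_iff {v : V} : G.bfsDepth v = 0 ↔ G.bfsRoot v = v :=
  (reachable_bfsRoot v).dist_eq_zero_iff

theorem bfsParent_adj {v : V} (h : G.bfsDepth v ≠ 0) : G.Adj (G.bfsParent v) v := by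
  rw [bfsParent, dif_neg h]
  exact (G.exists_adj_dist_add_one_eq h).choose_spec.1

theorem bfsDepth_bfsParent_add_one {v : V} (h : G.bfsDepth v ≠ 0) :
    G.bfsDepth (G.bfsParent v) + 1 = G.bfsDepth v := by
  rw [bfsDepth, bfsRoot_eq_of_adj (bfsParent_adj h), bfsParent, dif_neg h]
  exact (G.exists_adj_dist_add_one_eq h).choose_spec.2

theorem bfsDepth_induction {P : V → Prop} (root : ∀ v, G.bfsDepth v = 0 → P v)
    (step : ∀ v, G.bfsDepth v ≠ 0 → P (G.bfsParent v) → P v) (v : V) : P v := by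
  induction hv : G.bfsDepth v using Nat.strong_induction_on generalizing v with
  | _ n ih =>
    by_cases h : G.bfsDepth v = 0
    · exact root v h
    · have := bfsDepth_bfsParent_add_one h
      exact step v h (ih _ (by omega) _ rfl)

section Forest

variable [Fintype V]

variable (G) in
noncomputable def bfsTreeEdges : Finset (Sym2 V) :=
  {v | G.bfsDepth v ≠ 0}.toFinset.image fun v => s(G.bfsParent v, v)

theorem bfsTreeEdges_subset_edgeFinset : G.bfsTreeEdges ⊆ G.edgeFinset := by
  intro e he
  obtain ⟨v, hv, rfl⟩ := Finset.mem_image.mp he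
  exact mem_edgeFinset.mpr (bfsParent_adj (by simpa using hv))

theorem card_bfsDepth_eq_zero :
    {v | G.bfsDepth v = 0}.toFinset.card = Nat.card G.ConnectedComponent := by
  rw [Nat.card_eq_fintype_card, ← Finset.card_univ]
  refine Finset.card_nbij' G.connectedComponentMk Quot.out (by simp) (fun c _ => ?_)
    (fun v hv => ?_) (fun c _ => c.out_eq)
  · have : G.connectedComponentMk c.out = c := c.out_eq
    simp [bfsDepth_eq_zero_iff, bfsRoot, this]
  · simpa [bfsDepth_eq_zero_iff, bfsRoot] using hv

theorem card_bfsTreeEdges_add_card_connectedComponent :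
    G.bfsTreeEdges.card + Nat.card G.ConnectedComponent = Fintype.card V := by
  rw [bfsTreeEdges, Finset.card_image_of_injOn, ← card_bfsDepth_eq_zero]
  · simpa [add_comm] using Finset.card_filter_add_card_filter_not (s := Finset.univ)
      (fun v => G.bfsDepth v = 0)
  · intro v hv w hw hvw
    simp only [Set.coe_toFinset, Set.mem_ofPred_eq] at hv hw
    rcases Sym2.eq_iff.mp hvw with ⟨-, h⟩ | ⟨hpv, hpw⟩
    · exact h
    · have hv' := bfsDepth_bfsParent_add_one hv
      have hw' := bfsDepth_bfsParent_add_one hw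
      rw [hpv] at hv'
      rw [← hpw] at hw'
      omega

end Forest

section Scaling

variable [Field K]

/-- Row and column factors `(d v, e v)`, solved from those of the parent `p` so that
`d p * M p v * e v = N p v` and `d v * M v p * e p = N v p`. -/
noncomputable def bfsScaling (G : SimpleGraph V) (M N : Matrix V V K) (v : V) : K × K :=
  if G.bfsDepth v = 0 then (1, 1)
  else
    let p := G.bfsParent v
    (N v p / (M v p * (bfsScaling G M N p).2), N p v / ((bfsScaling G M N p).1 * M p v))
termination_by G.bfsDepth v
decreasing_by exact Nat.lt_of_succ_le (bfsDepth_bfsParent_add_one ‹_›).le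

theorem bfsScaling_of_bfsDepth_ne_zero {M N : Matrix V V K} {v : V} (h : G.bfsDepth v ≠ 0) :
    G.bfsScaling M N v =
      (N v (G.bfsParent v) / (M v (G.bfsParent v) * (G.bfsScaling M N (G.bfsParent v)).2),
        N (G.bfsParent v) v / ((G.bfsScaling M N (G.bfsParent v)).1 * M (G.bfsParent v) v)) := by
  rw [bfsScaling, if_neg h]

theorem bfsScaling_ne_zero {M N : Matrix V V K} (hM : ∀ u v, G.Adj u v → M u v ≠ 0)
    (hN : ∀ u v, G.Adj u v → N u v ≠ 0) (v : V) :
    (G.bfsScaling M N v).1 ≠ 0 ∧ (G.bfsScaling M N v).2 ≠ 0 := by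
  induction v using bfsDepth_induction (G := G) with
  | root v h => simp [bfsScaling, h]
  | step v h ih =>
    have hadj := bfsParent_adj h
    rw [bfsScaling_of_bfsDepth_ne_zero h]
    exact ⟨div_ne_zero (hN _ _ hadj.symm) (mul_ne_zero (hM _ _ hadj.symm) ih.2),
      div_ne_zero (hN _ _ hadj) (mul_ne_zero ih.1 (hM _ _ hadj))⟩

variable [Fintype V] {M N : Matrix V V K}

theorem exists_diagonal_scaling_eq_off_bfsTreeEdges (hM : ∀ u v, M u v ≠ 0 ↔ G.Adj u v)
    (hN : ∀ u v, N u v ≠ 0 ↔ G.Adj u v) :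
    ∃ d e : V → K, ∀ u v, (N - Matrix.diagonal d * M * Matrix.diagonal e) u v ≠ 0 →
      s(u, v) ∈ G.edgeFinset \ G.bfsTreeEdges := by
  refine ⟨fun v => (G.bfsScaling M N v).1, fun v => (G.bfsScaling M N v).2, fun u v huv => ?_⟩
  have hne := bfsScaling_ne_zero (fun u v => (hM u v).mpr) (fun u v => (hN u v).mpr)
  simp only [Matrix.sub_apply, Matrix.mul_diagonal, Matrix.diagonal_mul] at huv
  have hadj : G.Adj u v := by
    by_contra h
    rw [not_ne_iff.mp ((hM u v).not.mpr h), not_ne_iff.mp ((hN u v).not.mpr h)] at huv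
    simp at huv
  refine Finset.mem_sdiff.mpr ⟨mem_edgeFinset.mpr hadj, fun htree => huv ?_⟩
  obtain ⟨w, hw, hwuv⟩ := Finset.mem_image.mp htree
  replace hw : G.bfsDepth w ≠ 0 := by simpa using hw
  have hp := hne (G.bfsParent w)
  have hMw := (hM _ _).mpr (bfsParent_adj hw)
  have hMw' := (hM _ _).mpr (bfsParent_adj hw).symm
  rcases Sym2.eq_iff.mp hwuv with ⟨rfl, rfl⟩ | ⟨rfl, rfl⟩
  · rw [bfsScaling_of_bfsDepth_ne_zero hw]
    field_simp [hp.1, hMw]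
    ring
  · rw [bfsScaling_of_bfsDepth_ne_zero hw]
    field_simp [hp.2, hMw']
    ring

theorem rank_le_rank_add_two_mul_cycDim (hM : ∀ u v, M u v ≠ 0 ↔ G.Adj u v)
    (hN : ∀ u v, N u v ≠ 0 ↔ G.Adj u v) :
    (N.rank : ℤ) ≤ M.rank + 2 * cycDim G := by
  obtain ⟨d, e, hsupp⟩ := exists_diagonal_scaling_eq_off_bfsTreeEdges hM hN
  set T := N - Matrix.diagonal d * M * Matrix.diagonal e
  have hrank : N.rank ≤ M.rank + T.rank := calc
    N.rank = (Matrix.diagonal d * M * Matrix.diagonal e + T).rank := by rw [add_sub_cancel]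
    _ ≤ (Matrix.diagonal d * M * Matrix.diagonal e).rank + T.rank := Matrix.rank_add_le _ _
    _ ≤ M.rank + T.rank := by
      gcongr
      exact (Matrix.rank_mul_le_left _ _).trans (Matrix.rank_mul_le_right _ _)
  have hsub := bfsTreeEdges_subset_edgeFinset (G := G)
  have hT := Matrix.rank_le_two_mul_card_of_support_subset hsupp
  rw [Finset.card_sdiff_of_subset hsub] at hT
  have := Finset.card_le_card hsub
  have := card_bfsTreeEdges_add_card_connectedComponent (G := G)
  rw [cycDim, Set.ncard_eq_toFinset_card', Set.toFinset_card, ← edgeFinset_card,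
    Nat.card_eq_fintype_card]
  omega

end Scaling

end SimpleGraph

/-- For any orientation of a finite simple graph `G`,
`sr(G^σ) ≥ r(G) - 2 d(G)`. -/
theorem skewRank_ge_rank_sub_two_mul_cycDim {V : Type*} [Fintype V]
    (G : SimpleGraph V) (S : Matrix V V ℝ) (hS : IsSkewAdjMatrix G S) :
    ((adjMat G).rank : ℤ) - 2 * cycDim G ≤ (S.rank : ℤ) := by
  have hA : ∀ u v, adjMat G u v ≠ 0 ↔ G.Adj u v := fun u v => by
    by_cases h : G.Adj u v <;> simp [adjMat, h]
  have hS' : ∀ u v, S u v ≠ 0 ↔ G.Adj u v := fun u v => by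
    refine ⟨fun hne => not_not.mp fun h => hne (hS.2.1 u v h), fun h => ?_⟩
    rcases hS.1 u v h with h1 | h1 <;> simp [h1]
  linarith [G.rank_le_rank_add_two_mul_cycDim hS' hA]
end

section
/- If T^σ is an oriented forest (the underlying graph T is acyclic) with matching number m(T), then r(T) = sr(T^σ) = 2·m(T), where r(T) is the rank of the adjacency matrix of T. -/
open scoped Classical

/-- The matching number of a graph: the largest number of edges of a
matching subgraph. -/
noncomputable def matchingNumber {V : Type*} (G : SimpleGraph V) : ℕ :=
  sSup {k | ∃ M : G.Subgraph, M.IsMatching ∧ M.edgeSet.ncard = k}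

/-!
Every matrix whose nonzero pattern is the edge relation of a finite forest has rank twice the
matching number; the adjacency matrix and all skew-adjacency matrices are such matrices.
A forest with an edge has a pendant edge `uv`, `v` a leaf. Row and column `v` are then
supported at `u` alone, so row `u` is independent of the other rows (it is the only one nonzero
in column `v`), and likewise column `u`: clearing both lowers the rank by exactly two and leaves
a matrix with the nonzero pattern of the forest minus all edges at `u`. Deleting those edges
lowers the matching number by exactly one: a matching loses at most its edge at `u`, and `uv`
can be added to any matching of the smaller forest. Induction on the forest concludes.
-/

open SimpleGraph

namespace Matrix

variable {K m n : Type*} [Field K] [Fintype n]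

theorem rank_eq_rank_updateRow_zero_add_one [Finite m] [DecidableEq m] (M : Matrix m n K)
    {u : m} {v : n} (hcol : ∀ i, i ≠ u → M i v = 0) (huv : M u v ≠ 0) :
    M.rank = (M.updateRow u 0).rank + 1 := by
  set P := Submodule.span K (Set.range (M.updateRow u 0).row)
  have hspan : Submodule.span K (Set.range M.row) = P ⊔ K ∙ M u := by
    rw [sup_comm, ← Submodule.span_insert]
    refine le_antisymm (Submodule.span_mono ?_) (Submodule.span_le.mpr ?_)
    · rintro _ ⟨i, rfl⟩
      by_cases hi : i = u
      · exact Or.inl (by rw [hi]; rfl)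
      · exact Or.inr ⟨i, by simp [row, updateRow_ne hi]⟩
    · rintro _ (rfl | ⟨i, rfl⟩)
      · exact Submodule.subset_span ⟨u, rfl⟩
      · by_cases hi : i = u
        · simp [row, hi]
        · simpa [row, updateRow_ne hi] using
            (Submodule.subset_span ⟨i, rfl⟩ : M.row i ∈ Submodule.span K (Set.range M.row))
  -- every vector of `P` vanishes at `v`, while `M u v ≠ 0`
  have hnotMem : M u ∉ P := by
    have hP : P ≤ LinearMap.ker (LinearMap.proj v) := by
      refine Submodule.span_le.mpr ?_
      rintro _ ⟨i, rfl⟩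
      by_cases hi : i = u
      · simp [row, hi]
      · simp [row, updateRow_ne hi, hcol i hi]
    exact fun h => huv (hP h)
  rw [rank_eq_finrank_span_row, rank_eq_finrank_span_row, hspan,
    Submodule.finrank_sup_span_singleton hnotMem]

theorem rank_eq_rank_updateRow_updateCol_zero_add_two [DecidableEq n] (M : Matrix n n K)
    {u v : n} (hne : u ≠ v) (hcol : ∀ i, i ≠ u → M i v = 0) (hrow : ∀ j, j ≠ u → M v j = 0)
    (huv : M u v ≠ 0) (hvu : M v u ≠ 0) :
    M.rank = ((M.updateRow u 0).updateCol u 0).rank + 2 := by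
  have hrowStep := M.rank_eq_rank_updateRow_zero_add_one hcol huv
  have hcolStep := (M.updateRow u 0)ᵀ.rank_eq_rank_updateRow_zero_add_one (u := u) (v := v)
    (fun j hj => by simp [updateRow_ne hne.symm, hrow j hj]) (by simpa [updateRow_ne hne.symm])
  rw [updateRow_transpose, rank_transpose, rank_transpose] at hcolStep
  omega

end Matrix

section Matching

variable {V : Type*} {G : SimpleGraph V}

theorem SimpleGraph.Subgraph.IsMatching.exists_isMatching_edgeSet_eq_inter {M : G.Subgraph}
    (hM : M.IsMatching) (H : SimpleGraph V) :
    ∃ M' : H.Subgraph, M'.IsMatching ∧ M'.edgeSet = M.edgeSet ∩ H.edgeSet := by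
  refine ⟨{ verts := {x | ∃ y, M.Adj x y ∧ H.Adj x y}
            Adj := fun x y => M.Adj x y ∧ H.Adj x y
            adj_sub := fun h => h.2
            edge_vert := fun h => ⟨_, h⟩
            symm := ⟨fun _ _ h => ⟨h.1.symm, h.2.symm⟩⟩ }, ?_, ?_⟩
  · rintro x ⟨y, hy⟩
    exact ⟨y, hy, fun z hz => hM.eq_of_adj_left hz.1 hy.1⟩
  · ext e
    induction e with
    | _ x y => rfl

theorem SimpleGraph.Subgraph.IsMatching.ncard_edgeSet_inter_incidenceSet_le_one [Finite V]
    {M : G.Subgraph} (hM : M.IsMatching) (u : V) :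
    (M.edgeSet ∩ G.incidenceSet u).ncard ≤ 1 := by
  rw [Set.ncard_le_one]
  rintro _ ⟨ha, -, hua⟩ _ ⟨hb, -, hub⟩
  obtain ⟨a, rfl⟩ := Sym2.mem_iff_exists.mp hua
  obtain ⟨b, rfl⟩ := Sym2.mem_iff_exists.mp hub
  rw [hM.eq_of_adj_left (M.mem_edgeSet.mp ha) (M.mem_edgeSet.mp hb)]

variable [Finite V]

theorem bddAbove_ncard_edgeSet_isMatching (G : SimpleGraph V) :
    BddAbove {k | ∃ M : G.Subgraph, M.IsMatching ∧ M.edgeSet.ncard = k} := by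
  refine ⟨G.edgeSet.ncard, ?_⟩
  rintro _ ⟨M, -, rfl⟩
  exact Set.ncard_le_ncard M.edgeSet_subset

theorem SimpleGraph.Subgraph.IsMatching.ncard_edgeSet_le_matchingNumber {M : G.Subgraph}
    (hM : M.IsMatching) : M.edgeSet.ncard ≤ matchingNumber G :=
  le_csSup (bddAbove_ncard_edgeSet_isMatching G) ⟨M, hM, rfl⟩

theorem exists_isMatching_ncard_edgeSet_eq_matchingNumber (G : SimpleGraph V) :
    ∃ M : G.Subgraph, M.IsMatching ∧ M.edgeSet.ncard = matchingNumber G :=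
  Nat.sSup_mem (s := {k | ∃ M : G.Subgraph, M.IsMatching ∧ M.edgeSet.ncard = k})
    ⟨0, ⊥, fun _ h => h.elim, by simp⟩ (bddAbove_ncard_edgeSet_isMatching G)

theorem matchingNumber_bot : matchingNumber (⊥ : SimpleGraph V) = 0 := by
  obtain ⟨M, -, hM⟩ := exists_isMatching_ncard_edgeSet_eq_matchingNumber (⊥ : SimpleGraph V)
  have hempty : M.edgeSet = ∅ := Set.subset_empty_iff.mp (by simpa using M.edgeSet_subset)
  rw [← hM, hempty, Set.ncard_empty]

theorem matchingNumber_le_matchingNumber_deleteIncidenceSet_add_one (G : SimpleGraph V) (u : V) :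
    matchingNumber G ≤ matchingNumber (G.deleteIncidenceSet u) + 1 := by
  obtain ⟨M, hM, hcard⟩ := exists_isMatching_ncard_edgeSet_eq_matchingNumber G
  obtain ⟨M', hM', hM'edges⟩ := hM.exists_isMatching_edgeSet_eq_inter (G.deleteIncidenceSet u)
  have hdiff : M'.edgeSet = M.edgeSet \ G.incidenceSet u := by
    rw [hM'edges, edgeSet_deleteIncidenceSet, ← Set.inter_sdiff_assoc,
      Set.inter_eq_left.mpr M.edgeSet_subset]
  calc matchingNumber G
      = (M.edgeSet ∩ G.incidenceSet u).ncard + (M.edgeSet \ G.incidenceSet u).ncard := by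
        rw [Set.ncard_inter_add_ncard_sdiff_eq_ncard, hcard]
    _ ≤ 1 + M'.edgeSet.ncard := by
        rw [hdiff]
        exact Nat.add_le_add_right (hM.ncard_edgeSet_inter_incidenceSet_le_one u) _
    _ ≤ matchingNumber (G.deleteIncidenceSet u) + 1 := by
        rw [add_comm]
        exact Nat.add_le_add_right hM'.ncard_edgeSet_le_matchingNumber _

theorem matchingNumber_deleteIncidenceSet_add_one_le {u v : V} (huv : G.Adj u v)
    (hv : ∀ w, G.Adj v w → w = u) :
    matchingNumber (G.deleteIncidenceSet u) + 1 ≤ matchingNumber G := by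
  obtain ⟨M, hM, hcard⟩ :=
    exists_isMatching_ncard_edgeSet_eq_matchingNumber (G.deleteIncidenceSet u)
  set N := M.map (Hom.ofLE (G.deleteIncidenceSet_le u)) ⊔ G.subgraphOfAdj huv
  -- in `G.deleteIncidenceSet u` both `u` and its pendant neighbour `v` are isolated
  have hdisj : Disjoint (M.map (Hom.ofLE (G.deleteIncidenceSet_le u))).support
      (G.subgraphOfAdj huv).support := by
    rw [support_subgraphOfAdj, Set.disjoint_right]
    rintro x hx ⟨w, a, b, hab, rfl, rfl⟩
    obtain ⟨hGab, hau, hbu⟩ := deleteIncidenceSet_adj.mp (M.adj_sub hab)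
    rcases hx with hx | hx
    exacts [hau hx, hbu (hv b (hx ▸ hGab))]
  have hN : N.IsMatching := (hM.map_ofLE _).sup (.subgraphOfAdj huv) hdisj
  have hedges : N.edgeSet = insert s(u, v) M.edgeSet := by
    simp [N, Subgraph.edgeSet_sup, Set.union_singleton]
  have hnotMem : s(u, v) ∉ M.edgeSet := fun h =>
    (deleteIncidenceSet_adj.mp (M.adj_sub h)).2.1 rfl
  calc matchingNumber (G.deleteIncidenceSet u) + 1 = N.edgeSet.ncard := by
        rw [hedges, Set.ncard_insert_of_notMem hnotMem, hcard]
    _ ≤ matchingNumber G := hN.ncard_edgeSet_le_matchingNumber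

theorem matchingNumber_eq_matchingNumber_deleteIncidenceSet_add_one {u v : V} (huv : G.Adj u v)
    (hv : ∀ w, G.Adj v w → w = u) :
    matchingNumber G = matchingNumber (G.deleteIncidenceSet u) + 1 :=
  (matchingNumber_le_matchingNumber_deleteIncidenceSet_add_one G u).antisymm
    (matchingNumber_deleteIncidenceSet_add_one_le huv hv)

end Matching

theorem SimpleGraph.IsAcyclic.exists_adj_forall_adj_eq {V : Type*} [Finite V] {G : SimpleGraph V}
    (hG : G.IsAcyclic) {x y : V} (hxy : G.Adj x y) :
    ∃ u v, G.Adj u v ∧ ∀ w, G.Adj v w → w = u := by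
  have : Nonempty V := ⟨x⟩
  -- the last edge of a longest path is pendant
  obtain ⟨a, b, p, hp, hmax⟩ := Walk.exists_isPath_forall_isPath_length_le_length G
  have hnil : ¬p.Nil := by
    have := hmax x y (.cons hxy .nil) (by simp [hxy.ne])
    rw [← Walk.length_eq_zero_iff]
    simp at this
    omega
  refine ⟨p.penultimate, b, p.adj_penultimate hnil, fun w hbw => ?_⟩
  apply hG.eq_penultimate_of_adj_end hp hbw
  by_contra hw
  have := hmax a w (p.concat hbw) (hp.concat hw hbw)
  simp at this

def IsWeightedAdjMatrix {K V : Type*} [Zero K] (G : SimpleGraph V) (M : Matrix V V K) : Prop :=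
  ∀ i j, M i j ≠ 0 ↔ G.Adj i j

theorem isWeightedAdjMatrix_adjMat {V : Type*} (G : SimpleGraph V) :
    IsWeightedAdjMatrix G (adjMat G) := by
  intro i j
  by_cases h : G.Adj i j <;> simp [adjMat, h]

theorem IsSkewAdjMatrix.isWeightedAdjMatrix {V : Type*} {G : SimpleGraph V} {S : Matrix V V ℝ}
    (hS : IsSkewAdjMatrix G S) : IsWeightedAdjMatrix G S := by
  intro i j
  by_cases h : G.Adj i j
  · rcases hS.1 i j h with h' | h' <;> simp [h, h']
  · simp [h, hS.2.1 i j h]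

namespace IsWeightedAdjMatrix

variable {K V : Type*} {G : SimpleGraph V} {M : Matrix V V K}

theorem apply_eq_zero [Zero K] (hM : IsWeightedAdjMatrix G M) {i j : V} (h : ¬G.Adj i j) :
    M i j = 0 :=
  not_not.mp fun hne => h ((hM i j).mp hne)

theorem deleteIncidenceSet [Zero K] [DecidableEq V] (hM : IsWeightedAdjMatrix G M)
    (u : V) : IsWeightedAdjMatrix (G.deleteIncidenceSet u) ((M.updateRow u 0).updateCol u 0) := by
  intro i j
  rw [deleteIncidenceSet_adj, ← hM i j]
  by_cases hi : i = u <;> by_cases hj : j = u <;>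
    simp [Matrix.updateRow_apply, hi, hj]

theorem rank_eq_two_mul_matchingNumber [Field K] [Fintype V] (hT : G.IsAcyclic)
    (hM : IsWeightedAdjMatrix G M) : M.rank = 2 * matchingNumber G := by
  induction G using WellFoundedLT.induction generalizing M with
  | _ T ih =>
    by_cases hbot : T = ⊥
    · subst hbot
      have hM0 : M = 0 := by
        ext i j
        exact hM.apply_eq_zero (by simp)
      simp [hM0, matchingNumber_bot]
    obtain ⟨x, y, hxy⟩ := ne_bot_iff_exists_adj.mp hbot
    obtain ⟨u, v, huv, hv⟩ := hT.exists_adj_forall_adj_eq hxy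
    have hlt : T.deleteIncidenceSet u < T := (T.deleteIncidenceSet_le u).lt_of_not_ge
      fun hle => (deleteIncidenceSet_adj.mp (hle huv)).2.1 rfl
    have hrank := M.rank_eq_rank_updateRow_updateCol_zero_add_two huv.ne
      (fun i hi => hM.apply_eq_zero fun h => hi (hv i h.symm))
      (fun j hj => hM.apply_eq_zero fun h => hj (hv j h))
      ((hM u v).mpr huv) ((hM v u).mpr huv.symm)
    rw [hrank, ih _ hlt (hT.anti hlt.le) (hM.deleteIncidenceSet u),
      matchingNumber_eq_matchingNumber_deleteIncidenceSet_add_one huv hv]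
    ring

end IsWeightedAdjMatrix

/-- For an oriented forest, r(T) = sr(T^σ) = 2 m(T). -/
theorem forest_rank_eq_skewRank_eq_two_mul_matchingNumber {V : Type*} [Fintype V]
    (T : SimpleGraph V) (hT : T.IsAcyclic)
    (S : Matrix V V ℝ) (hS : IsSkewAdjMatrix T S) :
    (adjMat T).rank = S.rank ∧ S.rank = 2 * matchingNumber T := by
  have hA := (isWeightedAdjMatrix_adjMat T).rank_eq_two_mul_matchingNumber hT
  have hS' := hS.isWeightedAdjMatrix.rank_eq_two_mul_matchingNumber hT
  exact ⟨hA.trans hS'.symm, hS'⟩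
end

section
/- Let C_n^σ be an oriented cycle of order n. Then sr(C_n^σ) = n if C_n^σ is oddly-oriented, sr(C_n^σ) = n − 2 if C_n^σ is evenly-oriented, and sr(C_n^σ) = n − 1 if n is odd. -/
open scoped Classical

/-! Unroll a vector `x` on the cycle to the sequence `z m = p m * x (m mod n)`
(`z = S.cycleSignedLift x`), where `p m = S.cyclePathSign m` is the product of the orientation
signs `S k (k + 1)` along the path `0 → 1 → ⋯ → m`, indices taken mod `n`. In these
coordinates `S *ᵥ x = 0` says exactly that `z` is `2`-periodic, while every `z` satisfies
`z (m + n) = σ * z m`, `σ` being the sign of the cycle. Hence the kernel of `S` consists of the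
`2`-periodic sequences with `z (m + n) = σ * z m`, which are determined by `(z 0, z 1)`: for `n`
even they form a plane if `σ = 1` and vanish if `σ = -1`, for `n` odd they form the line
`z 1 = σ * z 0`. Rank–nullity turns these kernel dimensions `0, 2, 1` into the three ranks. -/

lemma Matrix.rank_add_finrank_ker {m n K : Type*} [Fintype n] [Field K] (A : Matrix m n K) :
    A.rank + Module.finrank K (LinearMap.ker A.mulVecLin) = Fintype.card n := by
  rw [Matrix.rank, LinearMap.finrank_range_add_finrank_ker, Module.finrank_fintype_fun_eq_card]

lemma Function.periodic_ite_even {α : Type*} (a b : α) :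
    Function.Periodic (fun m => if Even m then a else b) 2 :=
  fun m => by simp [Nat.even_add]

namespace Function.Periodic

variable {α : Type*} {f : ℕ → α}

lemma apply_eq_ite_even (hf : Periodic f 2) (m : ℕ) : f m = if Even m then f 0 else f 1 := by
  rw [← hf.map_mod_nat m]
  rcases Nat.mod_two_eq_zero_or_one m with h | h <;> simp [h, Nat.even_iff]

lemma periodic_of_even (hf : Periodic f 2) {n : ℕ} (he : Even n) : Periodic f n := by
  obtain ⟨k, rfl⟩ := he
  simpa [mul_two] using hf.nat_mul k

lemma apply_add_of_odd (hf : Periodic f 2) {n : ℕ} (ho : Odd n) (m : ℕ) :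
    f (m + n) = f (m + 1) := by
  obtain ⟨k, rfl⟩ := ho
  simpa [mul_comm, add_assoc, add_comm 1] using hf.nat_mul k (m + 1)

end Function.Periodic

section OrientedCycle

open Finset Function Matrix Module SimpleGraph Fin.NatCast Fin.CommRing

variable {n : ℕ} [NeZero n]

lemma Fin.sub_one_ne_add_one (hn : 3 ≤ n) (i : Fin n) : i - 1 ≠ i + 1 := by
  intro h
  have h₂ : ((2 : ℕ) : Fin n) = 0 := by push_cast; linear_combination -h
  have := congrArg Fin.val h₂
  rw [Fin.val_natCast, Nat.mod_eq_of_lt (by omega)] at this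
  simp at this

lemma Fin.exists_natCast_succ_eq (i : Fin n) : ∃ m : ℕ, ((m + 1 : ℕ) : Fin n) = i :=
  ⟨i.val + n - 1, by rw [show i.val + n - 1 + 1 = i.val + n by have := NeZero.pos n; omega]; simp⟩

lemma SimpleGraph.cycleGraph_adj_iff_of_two_le (hn : 2 ≤ n) {i j : Fin n} :
    (cycleGraph n).Adj i j ↔ j = i - 1 ∨ j = i + 1 := by
  obtain ⟨k, rfl⟩ : ∃ k, n = k + 2 := ⟨n - 2, by omega⟩
  rw [← mem_neighborSet, cycleGraph_neighborSet]
  rfl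

def Matrix.cyclePathSign (S : Matrix (Fin n) (Fin n) ℝ) (m : ℕ) : ℝ :=
  ∏ k ∈ range m, S k (k + 1 : ℕ)

def Matrix.cycleSignedLift (S : Matrix (Fin n) (Fin n) ℝ) : (Fin n → ℝ) →ₗ[ℝ] ℕ → ℝ :=
  LinearMap.pi fun m => S.cyclePathSign m • LinearMap.proj (m : Fin n)

namespace Matrix

variable (S : Matrix (Fin n) (Fin n) ℝ)

lemma cyclePathSign_succ (m : ℕ) :
    S.cyclePathSign (m + 1) = S.cyclePathSign m * S m (m + 1 : ℕ) :=
  prod_range_succ _ _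

lemma cyclePathSign_add_self (m : ℕ) :
    S.cyclePathSign (m + n) = S.cyclePathSign n * S.cyclePathSign m := by
  simp [cyclePathSign, add_comm m n, prod_range_add]

lemma cyclePathSign_self : S.cyclePathSign n = ∏ i : Fin n, S i (i + 1) := by
  simp [cyclePathSign, ← Fin.prod_univ_eq_prod_range]

lemma cycleSignedLift_apply (x : Fin n → ℝ) (m : ℕ) :
    S.cycleSignedLift x m = S.cyclePathSign m * x m :=
  rfl

lemma cycleSignedLift_add_self (x : Fin n → ℝ) (m : ℕ) :
    S.cycleSignedLift x (m + n) = S.cyclePathSign n * S.cycleSignedLift x m := by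
  simp [cycleSignedLift_apply, cyclePathSign_add_self, mul_assoc]

end Matrix

namespace IsSkewAdjMatrix

variable {S : Matrix (Fin n) (Fin n) ℝ}

lemma apply_add_one_mul_self (hn : 2 ≤ n) (hS : IsSkewAdjMatrix (cycleGraph n) S)
    (i : Fin n) : S i (i + 1) * S i (i + 1) = 1 := by
  rcases hS.1 i (i + 1) ((cycleGraph_adj_iff_of_two_le hn).2 (Or.inr rfl)) with h | h <;>
    simp [h]

lemma apply_natCast_succ_mul_self (hn : 2 ≤ n) (hS : IsSkewAdjMatrix (cycleGraph n) S)
    (m : ℕ) : S m (m + 1 : ℕ) * S m (m + 1 : ℕ) = 1 := by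
  rw [Nat.cast_succ]
  exact hS.apply_add_one_mul_self hn m

lemma cyclePathSign_mul_self (hn : 2 ≤ n) (hS : IsSkewAdjMatrix (cycleGraph n) S) (m : ℕ) :
    S.cyclePathSign m * S.cyclePathSign m = 1 := by
  rw [cyclePathSign, ← prod_mul_distrib]
  exact prod_eq_one fun k _ => hS.apply_natCast_succ_mul_self hn k

lemma cyclePathSign_ne_zero (hn : 2 ≤ n) (hS : IsSkewAdjMatrix (cycleGraph n) S) (m : ℕ) :
    S.cyclePathSign m ≠ 0 :=
  left_ne_zero_of_mul_eq_one (hS.cyclePathSign_mul_self hn m)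

lemma cycleSignedLift_injective (hn : 2 ≤ n) (hS : IsSkewAdjMatrix (cycleGraph n) S) :
    Injective S.cycleSignedLift := by
  rw [← LinearMap.ker_eq_bot, LinearMap.ker_eq_bot']
  intro x hx
  funext i
  simpa [cycleSignedLift_apply, hS.cyclePathSign_ne_zero hn] using congrFun hx i.val

lemma mulVec_apply (hn : 3 ≤ n) (hS : IsSkewAdjMatrix (cycleGraph n) S) (x : Fin n → ℝ)
    (i : Fin n) : (S *ᵥ x) i = S i (i + 1) * x (i + 1) - S (i - 1) i * x (i - 1) := by
  rw [mulVec, dotProduct,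
    Fintype.sum_eq_add (i + 1) (i - 1) (Fin.sub_one_ne_add_one hn i).symm, hS.2.2 (i - 1) i]
  · ring
  · rintro j ⟨hj₁, hj₂⟩
    rw [hS.2.1 i j (by rw [cycleGraph_adj_iff_of_two_le (by omega)]; tauto), zero_mul]

lemma mulVec_natCast_succ (hn : 3 ≤ n) (hS : IsSkewAdjMatrix (cycleGraph n) S)
    (x : Fin n → ℝ) (m : ℕ) :
    (S *ᵥ x) (m + 1 : ℕ) =
      S.cyclePathSign (m + 1) * (S.cycleSignedLift x (m + 2) - S.cycleSignedLift x m) := by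
  have hsub : ((m + 1 : ℕ) : Fin n) - 1 = m := by push_cast; ring
  have hadd : ((m + 1 : ℕ) : Fin n) + 1 = (m + 2 : ℕ) := by push_cast; ring
  have hp₂ : S.cyclePathSign (m + 2) = S.cyclePathSign (m + 1) * S (m + 1 : ℕ) (m + 2 : ℕ) :=
    S.cyclePathSign_succ (m + 1)
  rw [hS.mulVec_apply hn, hsub, hadd, cycleSignedLift_apply, cycleSignedLift_apply, hp₂,
    cyclePathSign_succ]
  set s₀ := S m (m + 1 : ℕ)
  set s₁ := S (m + 1 : ℕ) (m + 2 : ℕ)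
  linear_combination (s₀ * x m - s₁ * x (m + 2 : ℕ) * s₀ * s₀) *
      hS.cyclePathSign_mul_self (by omega) m -
    s₁ * x (m + 2 : ℕ) * hS.apply_natCast_succ_mul_self (by omega) m

lemma mulVec_eq_zero_iff (hn : 3 ≤ n) (hS : IsSkewAdjMatrix (cycleGraph n) S)
    (x : Fin n → ℝ) : S *ᵥ x = 0 ↔ Periodic (S.cycleSignedLift x) 2 := by
  simp only [funext_iff, Pi.zero_apply, Periodic]
  constructor
  · intro h m
    have := hS.mulVec_natCast_succ hn x m
    rw [h, eq_comm, mul_eq_zero, sub_eq_zero] at this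
    exact this.resolve_left (hS.cyclePathSign_ne_zero (by omega) _)
  · intro h i
    obtain ⟨m, rfl⟩ := Fin.exists_natCast_succ_eq i
    rw [hS.mulVec_natCast_succ hn, h, sub_self, mul_zero]

lemma exists_mulVec_eq_zero_iff (hn : 3 ≤ n) (hS : IsSkewAdjMatrix (cycleGraph n) S)
    (z : ℕ → ℝ) :
    (∃ x, S *ᵥ x = 0 ∧ S.cycleSignedLift x = z) ↔
      Periodic z 2 ∧ ∀ m, z (m + n) = S.cyclePathSign n * z m := by
  constructor
  · rintro ⟨x, hx, rfl⟩
    exact ⟨(hS.mulVec_eq_zero_iff hn x).1 hx, S.cycleSignedLift_add_self x⟩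
  · rintro ⟨hz₂, hzn⟩
    have hσ := hS.cyclePathSign_mul_self (by omega)
    set f : ℕ → ℝ := fun m => S.cyclePathSign m * z m
    -- `f` is `n`-periodic, so it descends to a vector on `Fin n`
    have hf : Periodic f n := fun m => by
      simp only [f, cyclePathSign_add_self, hzn]
      linear_combination S.cyclePathSign m * z m * hσ n
    have hx : S.cycleSignedLift (fun i => f i) = z := funext fun m => by
      simp only [cycleSignedLift_apply, Fin.val_natCast, hf.map_mod_nat, f, ← mul_assoc, hσ,
        one_mul]
    exact ⟨_, (hS.mulVec_eq_zero_iff hn _).2 (hx ▸ hz₂), hx⟩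

lemma eq_zero_of_mulVec_eq_zero (hn : 3 ≤ n) (hS : IsSkewAdjMatrix (cycleGraph n) S)
    {x : Fin n → ℝ} (hx : S *ᵥ x = 0) (h₀ : S.cycleSignedLift x 0 = 0)
    (h₁ : S.cycleSignedLift x 1 = 0) : x = 0 := by
  have hz₂ := (hS.mulVec_eq_zero_iff hn x).1 hx
  refine hS.cycleSignedLift_injective (by omega) (funext fun m => ?_)
  rw [hz₂.apply_eq_ite_even, h₀, h₁, ite_self, map_zero, Pi.zero_apply]

lemma ker_eq_bot (hn : 3 ≤ n) (hS : IsSkewAdjMatrix (cycleGraph n) S) (he : Even n)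
    (hσ : S.cyclePathSign n = -1) : LinearMap.ker S.mulVecLin = ⊥ := by
  rw [LinearMap.ker_eq_bot']
  intro x hx
  obtain ⟨hz₂, hzn⟩ := (hS.exists_mulVec_eq_zero_iff hn _).1 ⟨x, hx, rfl⟩
  refine hS.cycleSignedLift_injective (by omega) (funext fun m => ?_)
  have := hzn m
  rw [hz₂.periodic_of_even he, hσ] at this
  simp only [map_zero, Pi.zero_apply]
  linarith

lemma finrank_ker_eq_two (hn : 3 ≤ n) (hS : IsSkewAdjMatrix (cycleGraph n) S) (he : Even n)
    (hσ : S.cyclePathSign n = 1) : finrank ℝ (LinearMap.ker S.mulVecLin) = 2 := by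
  let ev (m : ℕ) : (Fin n → ℝ) →ₗ[ℝ] ℝ := (LinearMap.proj m).comp S.cycleSignedLift
  let φ := ((ev 0).prod (ev 1)).domRestrict (LinearMap.ker S.mulVecLin)
  have hφ : Bijective φ := by
    refine ⟨(injective_iff_map_eq_zero φ).2 ?_, ?_⟩
    · rintro ⟨x, hx⟩ h
      exact Subtype.ext (hS.eq_zero_of_mulVec_eq_zero hn hx
        (congrArg Prod.fst h) (congrArg Prod.snd h))
    · rintro ⟨a, b⟩
      obtain ⟨x, hx, hxz⟩ := (hS.exists_mulVec_eq_zero_iff hn _).2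
        ⟨periodic_ite_even a b, fun m => by simp [hσ, Nat.even_add, he]⟩
      exact ⟨⟨x, hx⟩, by simp [φ, ev, hxz]⟩
  rw [(LinearEquiv.ofBijective φ hφ).finrank_eq, finrank_prod, finrank_self]

lemma finrank_ker_eq_one (hn : 3 ≤ n) (hS : IsSkewAdjMatrix (cycleGraph n) S) (ho : Odd n) :
    finrank ℝ (LinearMap.ker S.mulVecLin) = 1 := by
  let φ := ((LinearMap.proj 0).comp S.cycleSignedLift).domRestrict (LinearMap.ker S.mulVecLin)
  have hφ : Bijective φ := by
    refine ⟨(injective_iff_map_eq_zero φ).2 ?_, ?_⟩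
    · rintro ⟨x, hx⟩ (h₀ : S.cycleSignedLift x 0 = 0)
      obtain ⟨hz₂, hzn⟩ := (hS.exists_mulVec_eq_zero_iff hn _).1 ⟨x, hx, rfl⟩
      have h₁ : S.cycleSignedLift x 1 = 0 := by
        rw [← hz₂.apply_add_of_odd ho 0, hzn, h₀, mul_zero]
      exact Subtype.ext (hS.eq_zero_of_mulVec_eq_zero hn hx h₀ h₁)
    · intro a
      have hσ := hS.cyclePathSign_mul_self (by omega) n
      have hn_even : ¬Even n := Nat.not_even_iff_odd.2 ho
      obtain ⟨x, hx, hxz⟩ := (hS.exists_mulVec_eq_zero_iff hn _).2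
        ⟨periodic_ite_even a (S.cyclePathSign n * a), fun m => by
          by_cases hm : Even m
          · simp [Nat.even_add, hm, hn_even]
          · simp [Nat.even_add, hm, hn_even, ← mul_assoc, hσ]⟩
      exact ⟨⟨x, hx⟩, by simp [φ, hxz]⟩
  rw [(LinearEquiv.ofBijective φ hφ).finrank_eq, finrank_self]

end IsSkewAdjMatrix

end OrientedCycle

/-- Skew-rank of an oriented cycle: n if oddly-oriented, n-2 if
evenly-oriented, n-1 if n is odd. The sign of the orientation is the sign of
the product of the skew-adjacency entries along the cycle. -/
theorem skewRank_oriented_cycle (n : ℕ) [NeZero n] (hn : 3 ≤ n)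
    (S : Matrix (Fin n) (Fin n) ℝ)
    (hS : IsSkewAdjMatrix (SimpleGraph.cycleGraph n) S) :
    (Even n → (∏ i : Fin n, S i (i + 1)) < 0 → S.rank = n) ∧
    (Even n → 0 < (∏ i : Fin n, S i (i + 1)) → S.rank = n - 2) ∧
    (Odd n → S.rank = n - 1) := by
  have hrank := S.rank_add_finrank_ker
  rw [Fintype.card_fin] at hrank
  have hσ : S.cyclePathSign n = 1 ∨ S.cyclePathSign n = -1 :=
    mul_self_eq_one_iff.1 (hS.cyclePathSign_mul_self (by omega) n)
  rw [← S.cyclePathSign_self]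
  refine ⟨fun he hneg => ?_, fun he hpos => ?_, fun ho => ?_⟩
  · rw [hS.ker_eq_bot hn he (hσ.resolve_left (by linarith)), finrank_bot] at hrank
    omega
  · have := hS.finrank_ker_eq_two hn he (hσ.resolve_right (by linarith))
    omega
  · have := hS.finrank_ker_eq_one hn ho
    omega
end

section
/- Let G be a graph containing a pendant vertex y with unique neighbor x, and let H = G − x − y. Then r(G) = r(H) + 2, where r denotes the rank of the adjacency matrix. -/
open scoped Classical

/-- If y is a pendant vertex of G with unique neighbor x, then deleting x and y
drops the adjacency rank by exactly 2. -/
theorem rank_pendant_delete {V : Type*} [Fintype V] [DecidableEq V]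
    (G : SimpleGraph V) (x y : V) (hy : G.neighborSet y = {x}) :
    (adjMat G).rank =
      ((adjMat G).submatrix
        (fun w : ({x, y}ᶜ : Finset V) => (w : V))
        (fun w : ({x, y}ᶜ : Finset V) => (w : V))).rank + 2 := by
  classical
  have hadj : G.Adj y x := by
    have hx : x ∈ G.neighborSet y := by rw [hy]; exact rfl
    exact hx
  have hxy : x ≠ y := by
    intro h; subst h; exact G.irrefl hadj
  have hyadj : ∀ w, G.Adj y w ↔ w = x := fun w => by
    rw [← SimpleGraph.mem_neighborSet, hy, Set.mem_singleton_iff]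
  set A := adjMat G with hA
  set c : (({x, y}ᶜ : Finset V) : Type _) → V := fun w => (w : V) with hc
  set B := A.submatrix c c with hB
  have hAdef : ∀ i j, A i j = if G.Adj i j then 1 else 0 := fun i j => rfl
  have hAy : ∀ j, A y j = if j = x then (1:ℝ) else 0 := by
    intro j; rw [hAdef]; simp only [hyadj]
  have hAsym : ∀ i j, A i j = A j i := by
    intro i j; rw [hAdef, hAdef, SimpleGraph.adj_comm]
  have hAxx : A x x = 0 := by rw [hAdef]; simp
  have hAxy : A x y = 1 := by rw [hAdef]; simp [hadj.symm]
  have hcompl : ∀ i : (({x, y}ᶜ : Finset V) : Type _), (i:V) ≠ x ∧ (i:V) ≠ y := by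
    intro i; have := i.2; simp only [Finset.mem_compl, Finset.mem_insert,
      Finset.mem_singleton, not_or] at this; exact this
  have hAiy : ∀ i : (({x, y}ᶜ : Finset V) : Type _), A (i:V) y = 0 := by
    intro i; rw [hAsym, hAy]; simp [(hcompl i).1]
  have hsplit : ∀ f : V → ℝ,
      ∑ j, f j = f x + f y + ∑ j : (({x, y}ᶜ : Finset V) : Type _), f j := by
    intro f
    rw [← Finset.sum_add_sum_compl {x, y} f, Finset.sum_pair hxy, Finset.sum_coe_sort]
  have hmv : ∀ (v : V → ℝ) (i : V), A.mulVec v i = ∑ j, A i j * v j := by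
    intro v i; rfl
  have hrowy : ∀ v : V → ℝ, A.mulVec v y = v x := by
    intro v
    rw [hmv, ← Finset.sum_subset (Finset.subset_univ {x})]
    · simp [hAy]
    · intro j _ hj
      simp only [Finset.mem_singleton] at hj
      rw [hAy]; simp [hj]
  have hrowx : ∀ v : V → ℝ,
      A.mulVec v x = v y + ∑ j : (({x, y}ᶜ : Finset V) : Type _), A x j * v j := by
    intro v
    rw [hmv, hsplit (fun j => A x j * v j), hAxx, hAxy]
    ring
  have hrowi : ∀ (i : (({x, y}ᶜ : Finset V) : Type _)) (v : V → ℝ),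
      A.mulVec v i = A (i:V) x * v x +
        ∑ j : (({x, y}ᶜ : Finset V) : Type _), A (i:V) j * v j := by
    intro i v
    rw [hmv, hsplit (fun j => A (i:V) j * v j), hAiy]
    ring
  have hBmv : ∀ (u : (({x, y}ᶜ : Finset V) : Type _) → ℝ) i,
      B.mulVec u i = ∑ j : (({x, y}ᶜ : Finset V) : Type _), A (i:V) (j:V) * u j := by
    intro u i; rfl
  -- extension map
  set ext : ((({x, y}ᶜ : Finset V) : Type _) → ℝ) → (V → ℝ) := fun u w =>
    if h : w ∈ ({x, y}ᶜ : Finset V) then u ⟨w, h⟩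
    else if w = y then -(∑ j : (({x, y}ᶜ : Finset V) : Type _), A x (j:V) * u j) else 0
    with hext
  have hextx : ∀ u, ext u x = 0 := by
    intro u
    have hx : x ∉ ({x, y}ᶜ : Finset V) := by simp
    simp [hext, hx, hxy]
  have hexty : ∀ u, ext u y =
      -(∑ j : (({x, y}ᶜ : Finset V) : Type _), A x (j:V) * u j) := by
    intro u
    have hyc : y ∉ ({x, y}ᶜ : Finset V) := by simp
    simp [hext, hyc]
  have hexti : ∀ u (i : (({x, y}ᶜ : Finset V) : Type _)), ext u (i:V) = u i := by
    intro u i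
    simp only [hext]
    rw [dif_pos i.2]
  -- the kernels
  set K := LinearMap.ker A.mulVecLin with hK
  set K' := LinearMap.ker B.mulVecLin with hK'
  have hmemK : ∀ v : V → ℝ, v ∈ K ↔ ∀ i, A.mulVec v i = 0 := by
    intro v
    rw [hK, LinearMap.mem_ker, Matrix.mulVecLin_apply, funext_iff]
    rfl
  have hmemK' : ∀ u, u ∈ K' ↔ ∀ i, B.mulVec u i = 0 := by
    intro u
    rw [hK', LinearMap.mem_ker, Matrix.mulVecLin_apply, funext_iff]
    rfl
  -- v ∈ K gives v x = 0
  have hvx : ∀ v : V → ℝ, v ∈ K → v x = 0 := by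
    intro v hv
    have := (hmemK v).1 hv y
    rwa [hrowy] at this
  have htoK' : ∀ v : V → ℝ, v ∈ K → (fun i => v (c i)) ∈ K' := by
    intro v hv
    rw [hmemK']
    intro i
    rw [hBmv]
    have h1 := (hmemK v).1 hv (i : V)
    rw [hrowi i v, hvx v hv, mul_zero, zero_add] at h1
    exact h1
  have hfromK : ∀ u, u ∈ K' → ext u ∈ K := by
    intro u hu
    rw [hmemK]
    intro w
    by_cases hwx : w = x
    · subst hwx
      rw [hrowx, hexty]
      simp only [hexti]
      ring
    · by_cases hwy : w = y
      · subst hwy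
        rw [hrowy, hextx]
      · have hw : w ∈ ({x, y}ᶜ : Finset V) := by simp [hwx, hwy]
        have h2 : A.mulVec (ext u) w =
            A w x * ext u x +
              ∑ j : (({x, y}ᶜ : Finset V) : Type _), A w (j:V) * ext u (j:V) :=
          hrowi ⟨w, hw⟩ (ext u)
        rw [h2, hextx, mul_zero, zero_add]
        simp only [hexti]
        have h3 := (hmemK' u).1 hu ⟨w, hw⟩
        rw [hBmv] at h3
        exact h3
  -- the linear equivalence between kernels
  let E : K ≃ₗ[ℝ] K' :=
    { toFun := fun v => ⟨fun i => v.1 (c i), htoK' v.1 v.2⟩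
      map_add' := fun a b => rfl
      map_smul' := fun r a => rfl
      invFun := fun u => ⟨ext u.1, hfromK u.1 u.2⟩
      left_inv := by
        rintro ⟨v, hv⟩
        apply Subtype.ext
        funext w
        show ext (fun i => v (c i)) w = v w
        by_cases hwx : w = x
        · subst hwx; exact (hextx _).trans (hvx v hv).symm
        · by_cases hwy : w = y
          · rw [hwy]
            refine (hexty _).trans ?_
            show -∑ j : (({x, y}ᶜ : Finset V) : Type _), A x (j:V) * v (j:V) = v y
            have h1 := (hmemK v).1 hv x
            rw [hrowx] at h1
            linarith
          · have hw : w ∈ ({x, y}ᶜ : Finset V) := by simp [hwx, hwy]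
            exact hexti _ ⟨w, hw⟩
      right_inv := by
        rintro ⟨u, hu⟩
        apply Subtype.ext
        funext i
        show ext u (c i) = u i
        exact hexti u i }
  have hfinrank : Module.finrank ℝ K = Module.finrank ℝ K' := E.finrank_eq
  have h1 : A.rank + Module.finrank ℝ K = Fintype.card V := by
    rw [Matrix.rank, hK, LinearMap.finrank_range_add_finrank_ker,
      Module.finrank_fintype_fun_eq_card]
  have h2 : B.rank + Module.finrank ℝ K' = Fintype.card V - 2 := by
    rw [Matrix.rank, hK', LinearMap.finrank_range_add_finrank_ker,
      Module.finrank_fintype_fun_eq_card, Fintype.card_coe, Finset.card_compl,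
      Finset.card_pair hxy]
  have hn : 2 ≤ Fintype.card V := by
    have := Finset.card_le_univ ({x, y} : Finset V)
    rwa [Finset.card_pair hxy] at this
  omega
end

section
/- Let G^σ be an oriented graph containing a pendant vertex y with unique neighbor x, and let H^σ = G^σ − x − y. Then sr(G^σ) = sr(H^σ) + 2. -/
/-!
Enumerate the vertices as `x, y, v₁, v₂, …`. Since the row and the column of `y` vanish off `x`,
the leading block `[[S x x, S x y], [S y x, 0]]` is invertible, and its Schur complement
`D - C A⁻¹ B` is the block `D` on the remaining vertices: the only entry of `A⁻¹` that could
contribute is `(A⁻¹)₀₀`, a multiple of `S y y = 0`. Rank additivity for Schur complements then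
gives `sr(G) = 2 + sr(H)`.
-/

open scoped Classical

open Matrix

def Submodule.prodEquivProd {R M N : Type*} [Semiring R] [AddCommMonoid M] [AddCommMonoid N]
    [Module R M] [Module R N] (p : Submodule R M) (q : Submodule R N) :
    p.prod q ≃ₗ[R] p × q where
  toFun z := (⟨z.1.1, z.2.1⟩, ⟨z.1.2, z.2.2⟩)
  invFun z := ⟨(z.1, z.2), z.1.2, z.2.2⟩
  left_inv _ := rfl
  right_inv _ := rfl
  map_add' _ _ := rfl
  map_smul' _ _ := rfl

namespace Matrix

variable {K m₁ m₂ n₁ n₂ : Type*} [Field K] [Fintype n₁] [Fintype n₂]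

theorem rank_fromBlocks_zero_zero (A : Matrix m₁ n₁ K) (D : Matrix m₂ n₂ K) :
    (fromBlocks A 0 0 D).rank = A.rank + D.rank := by
  let eₘ := LinearEquiv.sumArrowLequivProdArrow m₁ m₂ K K
  let eₙ := LinearEquiv.sumArrowLequivProdArrow n₁ n₂ K K
  have h : (fromBlocks A 0 0 D).mulVecLin =
      eₘ.symm.toLinearMap ∘ₗ A.mulVecLin.prodMap D.mulVecLin ∘ₗ eₙ.toLinearMap := by
    refine LinearMap.ext fun v => funext fun i => ?_
    cases i <;> simp [eₘ, eₙ, fromBlocks_mulVec] <;> rfl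
  rw [rank, h, LinearMap.range_comp, LinearMap.range_comp, LinearEquiv.range, Submodule.map_top,
    LinearEquiv.finrank_map_eq, LinearMap.range_prodMap,
    (Submodule.prodEquivProd _ _).finrank_eq, Module.finrank_prod]
  rfl

variable {l m n : Type*} [Fintype l] [Fintype m] [Fintype n] [DecidableEq l] [DecidableEq m]
  [DecidableEq n]

-- Guttman rank additivity.
theorem rank_fromBlocks_of_invertible₁₁ (A : Matrix m m K) (B : Matrix m n K) (C : Matrix l m K)
    (D : Matrix l n K) [Invertible A] :
    (fromBlocks A B C D).rank = A.rank + (D - C * ⅟A * B).rank := by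
  rw [fromBlocks_eq_of_invertible₁₁, rank_mul_eq_left_of_isUnit_det,
    rank_mul_eq_right_of_isUnit_det, rank_fromBlocks_zero_zero]
  all_goals simp

end Matrix

section Pendant

variable {V K : Type*} [Fintype V] [DecidableEq V] [Field K]

noncomputable def Equiv.finTwoSumComplPair {x y : V} (hxy : x ≠ y) :
    Fin 2 ⊕ ({x, y}ᶜ : Finset V) ≃ V :=
  Equiv.ofBijective (Sum.elim ![x, y] Subtype.val) <| by
    refine ⟨Function.Injective.sumElim ?_ Subtype.val_injective ?_, fun v => ?_⟩
    · simp [Function.Injective, Fin.forall_fin_two, hxy, hxy.symm]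
    · rintro i ⟨w, hw⟩
      fin_cases i <;> aesop
    · by_cases hx : v = x
      · exact ⟨.inl 0, by simp [hx]⟩
      by_cases hy : v = y
      · exact ⟨.inl 1, by simp [hy]⟩
      exact ⟨.inr ⟨v, by simp [hx, hy]⟩, rfl⟩

@[simp]
theorem Equiv.finTwoSumComplPair_inl {x y : V} (hxy : x ≠ y) (i : Fin 2) :
    Equiv.finTwoSumComplPair hxy (.inl i) = ![x, y] i :=
  rfl

@[simp]
theorem Equiv.finTwoSumComplPair_inr {x y : V} (hxy : x ≠ y) (w : ({x, y}ᶜ : Finset V)) :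
    Equiv.finTwoSumComplPair hxy (.inr w) = w :=
  rfl

theorem Matrix.rank_eq_rank_submatrix_compl_pair_add_two (M : Matrix V V K) {x y : V}
    (hxy : x ≠ y) (hMxy : M x y ≠ 0) (hMyx : M y x ≠ 0) (hrow : ∀ v ≠ x, M y v = 0)
    (hcol : ∀ v ≠ x, M v y = 0) :
    M.rank = (M.submatrix (fun w : ({x, y}ᶜ : Finset V) => (w : V))
      (fun w : ({x, y}ᶜ : Finset V) => (w : V))).rank + 2 := by
  let N := M.submatrix (Equiv.finTwoSumComplPair hxy) (Equiv.finTwoSumComplPair hxy)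
  have hA : N.toBlocks₁₁ = !![M x x, M x y; M y x, 0] := by
    ext i j; fin_cases i <;> fin_cases j <;> simp [N, toBlocks₁₁, hcol y hxy.symm]
  have hdet : IsUnit N.toBlocks₁₁.det := by
    simp [hA, hMxy, hMyx]
  let := N.toBlocks₁₁.invertibleOfIsUnitDet hdet
  have hCB : N.toBlocks₂₁ * ⅟N.toBlocks₁₁ * N.toBlocks₁₂ = 0 := by
    have hA₀₀ : N.toBlocks₁₁⁻¹ 0 0 = 0 := by
      rw [inv_def, hA]
      simp [adjugate_fin_two]
    rw [invOf_eq_nonsing_inv]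
    ext k k'
    have hk : (k : V) ≠ x := by have := k.2; aesop
    have hk' : (k' : V) ≠ x := by have := k'.2; aesop
    simp [mul_apply, Fin.sum_univ_two, hA₀₀, N, toBlocks₂₁, toBlocks₁₂, hrow _ hk', hcol _ hk]
  calc M.rank = N.rank := (rank_submatrix M _ _).symm
    _ = (fromBlocks N.toBlocks₁₁ N.toBlocks₁₂ N.toBlocks₂₁ N.toBlocks₂₂).rank := by
      rw [fromBlocks_toBlocks]
    _ = _ := by
      rw [rank_fromBlocks_of_invertible₁₁, hCB, sub_zero,
        rank_of_isUnit _ ((isUnit_iff_isUnit_det _).2 hdet), Fintype.card_fin, add_comm]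
      rfl

end Pendant

/-- If y is a pendant vertex of the oriented graph with unique neighbor x, then
deleting x and y drops the skew-rank by exactly 2. -/
theorem skewRank_pendant_delete {V : Type*} [Fintype V] [DecidableEq V]
    (G : SimpleGraph V) (S : Matrix V V ℝ) (hS : IsSkewAdjMatrix G S)
    (x y : V) (hy : G.neighborSet y = {x}) :
    S.rank =
      (S.submatrix
        (fun w : ({x, y}ᶜ : Finset V) => (w : V))
        (fun w : ({x, y}ᶜ : Finset V) => (w : V))).rank + 2 := by
  obtain ⟨hsign, hzero, hskew⟩ := hS
  have hyx : G.Adj y x := by simp [← SimpleGraph.mem_neighborSet, hy]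
  have hne : ∀ {i j}, G.Adj i j → S i j ≠ 0 := fun h => by
    rcases hsign _ _ h with h | h <;> simp [h]
  have hrow : ∀ v ≠ x, S y v = 0 := fun v hv =>
    hzero y v fun h => hv (by simpa [hy] using (G.mem_neighborSet y v).2 h)
  exact S.rank_eq_rank_submatrix_compl_pair_add_two hyx.ne' (hne hyx.symm) (hne hyx) hrow
    fun v hv => by rw [hskew, hrow v hv, neg_zero]
end
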